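/- Let X and Y be random variables, each uniformly distributed on [0,1], such that (X,Y) ∈ IC_r for some r ∈ [-1,1]. Then the lower tail-dependence coefficient of (X,Y) exists and equals r, i.e. P(X ≤ u, Y ≤ u)/u → r as u → 0⁺. -/

import Mathlib

/-!
Invariance of correlation, tested on the indicator `g = 𝟙_{(-∞, u]}`, turns `r` into the
correlation of two Bernoulli(`u`) variables:
`r = (P(X ≤ u, Y ≤ u) - u²) / (u (1 - u))`.
Hence `P(X ≤ u, Y ≤ u) / u = r (1 - u) + u` for every `u ∈ (0, 1)`, which tends to `r`.
-/

open MeasureTheory ProbabilityTheory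

variable {Ω : Type*} [MeasurableSpace Ω]

noncomputable def cov (μ : Measure Ω) (X Y : Ω → ℝ) : ℝ :=
  ∫ ω, (X ω - ∫ a, X a ∂μ) * (Y ω - ∫ a, Y a ∂μ) ∂μ

noncomputable def corr (μ : Measure Ω) (X Y : Ω → ℝ) : ℝ :=
  cov μ X Y / Real.sqrt (variance X μ * variance Y μ)

def Admissible (μ : Measure Ω) (X Y : Ω → ℝ) (g : ℝ → ℝ) : Prop :=
  Measurable g ∧ MemLp (g ∘ X) 2 μ ∧ MemLp (g ∘ Y) 2 μ ∧
    0 < variance (g ∘ X) μ ∧ 0 < variance (g ∘ Y) μ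

def IC (μ : Measure Ω) (X Y : Ω → ℝ) (r : ℝ) : Prop :=
  corr μ X Y = r ∧ ∀ g : ℝ → ℝ, Admissible μ X Y g → corr μ (g ∘ X) (g ∘ Y) = r

open Set Filter Topology

lemma cov_eq_covariance (μ : Measure Ω) (X Y : Ω → ℝ) : cov μ X Y = covariance X Y μ := rfl

lemma measureReal_preimage_Iic_of_map_eq_uniform {μ : Measure Ω} {X : Ω → ℝ}
    (hXm : Measurable X) (hX : μ.map X = volume.restrict (Icc (0 : ℝ) 1)) {u : ℝ}
    (hu : u ∈ Icc (0 : ℝ) 1) : μ.real (X ⁻¹' Iic u) = u := by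
  have hIcc : Iic u ∩ Icc 0 1 = Icc 0 u := by
    ext x
    simp only [mem_inter_iff, mem_Iic, mem_Icc]
    exact ⟨fun h => ⟨h.2.1, h.1⟩, fun h => ⟨h.2, h.1, h.2.trans hu.2⟩⟩
  rw [measureReal_def, ← Measure.map_apply hXm measurableSet_Iic, hX,
    Measure.restrict_apply measurableSet_Iic, hIcc, Real.volume_Icc, sub_zero,
    ENNReal.toReal_ofReal hu.1]

lemma indicator_one_comp {α β M : Type*} [Zero M] [One M] (B : Set β) (f : α → β) :
    B.indicator (1 : β → M) ∘ f = (f ⁻¹' B).indicator 1 :=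
  funext fun _ => (indicator_comp_right f).symm

section Indicator

variable {μ : Measure Ω} [IsProbabilityMeasure μ] {s t : Set Ω}

lemma memLp_indicator_one (hs : MeasurableSet s) : MemLp (s.indicator (1 : Ω → ℝ)) 2 μ :=
  (memLp_const 1).indicator hs

lemma covariance_indicator_one (hs : MeasurableSet s) (ht : MeasurableSet t) :
    covariance (s.indicator 1) (t.indicator 1) μ = μ.real (s ∩ t) - μ.real s * μ.real t := by
  rw [covariance_eq_sub (memLp_indicator_one hs) (memLp_indicator_one ht), ← inter_indicator_one,
    integral_indicator_one (hs.inter ht), integral_indicator_one hs, integral_indicator_one ht]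

lemma variance_indicator_one (hs : MeasurableSet s) :
    variance (s.indicator 1) μ = μ.real s * (1 - μ.real s) := by
  rw [← covariance_self (measurable_one.indicator hs).aemeasurable,
    covariance_indicator_one hs hs, inter_self]
  ring

lemma corr_indicator_one_of_measureReal_eq {p : ℝ} (hs : MeasurableSet s) (ht : MeasurableSet t)
    (hsp : μ.real s = p) (htp : μ.real t = p) :
    corr μ (s.indicator 1) (t.indicator 1) = (μ.real (s ∩ t) - p ^ 2) / (p * (1 - p)) := by
  have hvar : 0 ≤ p * (1 - p) :=
    mul_nonneg (hsp ▸ measureReal_nonneg) (sub_nonneg.2 (hsp ▸ measureReal_le_one))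
  rw [corr, cov_eq_covariance, covariance_indicator_one hs ht, variance_indicator_one hs,
    variance_indicator_one ht, hsp, htp, Real.sqrt_mul_self hvar, sq]

end Indicator

lemma IC.measureReal_preimage_inter_preimage {μ : Measure Ω} [IsProbabilityMeasure μ]
    {X Y : Ω → ℝ} {r p : ℝ} (hIC : IC μ X Y r) (hXm : Measurable X) (hYm : Measurable Y)
    {B : Set ℝ} (hB : MeasurableSet B) (hXB : μ.real (X ⁻¹' B) = p)
    (hYB : μ.real (Y ⁻¹' B) = p) (hp : p ∈ Ioo (0 : ℝ) 1) :
    μ.real (X ⁻¹' B ∩ Y ⁻¹' B) = r * (p * (1 - p)) + p ^ 2 := by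
  have hvar : 0 < p * (1 - p) := mul_pos hp.1 (sub_pos.2 hp.2)
  have hadm : Admissible μ X Y (B.indicator 1) := by
    refine ⟨measurable_one.indicator hB, ?_, ?_, ?_, ?_⟩
    · rw [indicator_one_comp]; exact memLp_indicator_one (hXm hB)
    · rw [indicator_one_comp]; exact memLp_indicator_one (hYm hB)
    · rwa [indicator_one_comp, variance_indicator_one (hXm hB), hXB]
    · rwa [indicator_one_comp, variance_indicator_one (hYm hB), hYB]
  have hcorr := hIC.2 _ hadm
  rw [indicator_one_comp, indicator_one_comp,
    corr_indicator_one_of_measureReal_eq (hXm hB) (hYm hB) hXB hYB, div_eq_iff hvar.ne'] at hcorr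
  linarith

theorem ic_tail_dependence_general
    (μ : Measure Ω) [IsProbabilityMeasure μ] (X Y : Ω → ℝ)
    (hXm : Measurable X) (hYm : Measurable Y)
    (hXunif : Measure.map X μ = MeasureTheory.volume.restrict (Set.Icc (0 : ℝ) 1))
    (hYunif : Measure.map Y μ = MeasureTheory.volume.restrict (Set.Icc (0 : ℝ) 1))
    (r : ℝ) (hIC : IC μ X Y r) :
    Filter.Tendsto (fun u : ℝ => (μ {ω | X ω ≤ u ∧ Y ω ≤ u}).toReal / u)
      (nhdsWithin 0 (Set.Ioi 0)) (nhds r) := by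
  have hratio : ∀ u ∈ Ioo (0 : ℝ) 1,
      r * (1 - u) + u = μ.real (X ⁻¹' Iic u ∩ Y ⁻¹' Iic u) / u := by
    intro u hu
    rw [eq_div_iff hu.1.ne', hIC.measureReal_preimage_inter_preimage hXm hYm measurableSet_Iic
      (measureReal_preimage_Iic_of_map_eq_uniform hXm hXunif (Ioo_subset_Icc_self hu))
      (measureReal_preimage_Iic_of_map_eq_uniform hYm hYunif (Ioo_subset_Icc_self hu)) hu]
    ring
  have hlim : Tendsto (fun u : ℝ => r * (1 - u) + u) (𝓝[>] 0) (𝓝 r) := by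
    have := (show Continuous fun u : ℝ => r * (1 - u) + u by fun_prop).tendsto 0
    simpa using this.mono_left (nhdsWithin_le_nhds (s := Ioi (0 : ℝ)))
  exact hlim.congr' (eventually_of_mem (Ioo_mem_nhdsGT one_pos) hratio)

/-- If `X` and `Y` are uniform on `[0,1]` and `(X,Y) ∈ IC_r` for some
`r ∈ [-1,1]`, then the lower tail-dependence coefficient exists and equals `r`:
`P(X ≤ u, Y ≤ u)/u → r` as `u → 0⁺`. -/
theorem ic_tail_dependence
    (μ : Measure Ω) [IsProbabilityMeasure μ] (X Y : Ω → ℝ)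
    (hXm : Measurable X) (hYm : Measurable Y)
    (hXunif : Measure.map X μ = MeasureTheory.volume.restrict (Set.Icc (0 : ℝ) 1))
    (hYunif : Measure.map Y μ = MeasureTheory.volume.restrict (Set.Icc (0 : ℝ) 1))
    (r : ℝ) (hr : r ∈ Set.Icc (-1 : ℝ) 1) (hIC : IC μ X Y r) :
    Filter.Tendsto (fun u : ℝ => (μ {ω | X ω ≤ u ∧ Y ω ≤ u}).toReal / u)
      (nhdsWithin 0 (Set.Ioi 0)) (nhds r) :=
  ic_tail_dependence_general μ X Y hXm hYm hXunif hYunif r hIC
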